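/- arXiv:2202.00862 — 2 statements merged into one kernel-verified Lean document; each statement's English description precedes it below -/
import Mathlib

section
/- The insert operator is a differential: the ℤ-linear map ∂_I : ℤ[Ω] → ℤ[Ω] satisfies ∂_I ∘ ∂_I = 0. -/
/-!
Compositions (finite lists of positive integers) and the merge/insert operators
on the free ℤ-module with basis the set Ω of all compositions.
-/

/-- The merge operation `M_k` (0-indexed): merge the adjacent entries at
positions `k` and `k+1` into a single entry equal to their sum. -/
def mergeAt (ω : List ℕ+) (k : ℕ) : List ℕ+ :=
  ω.take k ++ (ω.getD k 1 + ω.getD (k + 1) 1) :: ω.drop (k + 2)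

/-- The insert operation `I_k`: insert a new entry `2` immediately after the
first `k` entries. -/
def insertAt2 (ω : List ℕ+) (k : ℕ) : List ℕ+ :=
  ω.take k ++ (2 : ℕ+) :: ω.drop k

/-- The merge differential `∂_M` on `ℤ[Ω]`, defined on a basis element `ω` of
length `s` by `∂_M(ω) = −Σ_{k=1}^{s−1} (−1)^k M_k(ω)`; in the 0-indexed
convention this is `Σ_{k=0}^{s−2} (−1)^k (merge at k)`. -/
noncomputable def dM : (List ℕ+ →₀ ℤ) →ₗ[ℤ] (List ℕ+ →₀ ℤ) :=
  Finsupp.lsum ℤ fun ω => LinearMap.toSpanSingleton ℤ _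
    (∑ k ∈ Finset.range (ω.length - 1),
      ((-1 : ℤ) ^ k) • Finsupp.single (mergeAt ω k) (1 : ℤ))

/-- The insert differential `∂_I` on `ℤ[Ω]`, defined on a basis element `ω` of
length `s` by `∂_I(ω) = Σ_{k=0}^{s} (−1)^k I_k(ω)`. -/
noncomputable def dI : (List ℕ+ →₀ ℤ) →ₗ[ℤ] (List ℕ+ →₀ ℤ) :=
  Finsupp.lsum ℤ fun ω => LinearMap.toSpanSingleton ℤ _
    (∑ k ∈ Finset.range (ω.length + 1),
      ((-1 : ℤ) ^ k) • Finsupp.single (insertAt2 ω k) (1 : ℤ))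

lemma insertAt2_eq_insertIdx : ∀ (ω : List ℕ+) (k : ℕ), k ≤ ω.length →
    insertAt2 ω k = ω.insertIdx k 2
  | ω, 0, _ => by simp [insertAt2]
  | [], k + 1, h => by simp at h
  | a :: ω, k + 1, h => by
    simp only [insertAt2, List.take_succ_cons, List.drop_succ_cons, List.insertIdx_succ_cons,
      List.cons_append]
    rw [← insertAt2_eq_insertIdx ω k (Nat.le_of_succ_le_succ h)]
    rfl

lemma insertAt2_length (ω : List ℕ+) (k : ℕ) (h : k ≤ ω.length) :
    (insertAt2 ω k).length = ω.length + 1 := by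
  rw [insertAt2_eq_insertIdx ω k h, List.length_insertIdx_of_le_length h]

lemma insertAt2_comm (ω : List ℕ+) (j k : ℕ) (hk : k ≤ j) (hj : j ≤ ω.length) :
    insertAt2 (insertAt2 ω j) k = insertAt2 (insertAt2 ω k) (j + 1) := by
  rw [insertAt2_eq_insertIdx ω j hj, insertAt2_eq_insertIdx ω k (hk.trans hj),
    insertAt2_eq_insertIdx _ k (by rw [List.length_insertIdx_of_le_length hj]; omega),
    insertAt2_eq_insertIdx _ (j+1) (by rw [List.length_insertIdx_of_le_length (hk.trans hj)]; omega),
    (List.insertIdx_comm 2 2 (l := ω) hk hj).symm]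

lemma dI_single (ω : List ℕ+) :
    dI (Finsupp.single ω 1) =
      ∑ k ∈ Finset.range (ω.length + 1),
        ((-1:ℤ)^k) • Finsupp.single (insertAt2 ω k) (1:ℤ) := by
  simp [dI]

/-- the insert operator is a differential: `∂_I ∘ ∂_I = 0`. -/
theorem insert_is_differential : dI.comp dI = 0 := by
  apply Finsupp.lhom_ext'
  intro ω
  apply LinearMap.ext_ring
  simp only [LinearMap.comp_apply, Finsupp.lsingle_apply, LinearMap.zero_apply]
  rw [dI_single]
  rw [map_sum]
  set s := ω.length with hs
  have key : ∀ j ∈ Finset.range (s + 1),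
      dI (((-1:ℤ)^j) • Finsupp.single (insertAt2 ω j) 1) =
      ∑ k ∈ Finset.range (s + 2),
        ((-1:ℤ)^(j+k)) • Finsupp.single (insertAt2 (insertAt2 ω j) k) (1:ℤ) := by
    intro j hj
    rw [map_smul, dI_single, insertAt2_length ω j (by simp at hj; omega), Finset.smul_sum]
    congr 1
    ext k
    rw [smul_smul, ← pow_add]
  rw [Finset.sum_congr rfl key, ← Finset.sum_product']
  apply Finset.sum_involution (fun p _ => if p.2 ≤ p.1 then (p.2, p.1 + 1) else (p.2 - 1, p.1))
  · rintro ⟨j, k⟩ ha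
    simp only [Finset.mem_product, Finset.mem_range] at ha
    obtain ⟨ha1, ha2⟩ := ha
    by_cases h : k ≤ j
    · rw [if_pos h]
      rw [insertAt2_comm ω j k h (by omega)]
      have hp : (-1:ℤ)^(j+k) + (-1:ℤ)^(k+(j+1)) = 0 := by
        have : k + (j + 1) = (j + k) + 1 := by omega
        rw [this, pow_succ]; ring
      rw [← add_smul, hp, zero_smul]
    · rw [if_neg h]
      obtain ⟨m, rfl⟩ : ∃ m, k = m + 1 := ⟨k - 1, by omega⟩
      simp only [Nat.add_sub_cancel]
      rw [insertAt2_comm ω m j (by omega) (by omega)]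
      have hp : (-1:ℤ)^(j+(m+1)) + (-1:ℤ)^(m+j) = 0 := by
        have : j + (m + 1) = (m + j) + 1 := by omega
        rw [this, pow_succ]; ring
      rw [← add_smul, hp, zero_smul]
  · rintro ⟨j, k⟩ _ _
    by_cases h : k ≤ j
    · rw [if_pos h]
      intro heq
      rw [Prod.mk.injEq] at heq
      omega
    · rw [if_neg h]
      intro heq
      rw [Prod.mk.injEq] at heq
      omega
  · rintro ⟨j, k⟩ ha
    by_cases h : k ≤ j
    · rw [if_pos h]
      have h2 : ¬ ((j + 1 : ℕ) ≤ k) := by omega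
      show (if (j+1) ≤ k then _ else _) = _
      rw [if_neg h2]
      simp
    · rw [if_neg h]
      have h2 : j ≤ k - 1 := by omega
      show (if j ≤ k - 1 then _ else _) = _
      rw [if_pos h2]
      rw [Prod.mk.injEq]
      omega
  · rintro ⟨j, k⟩ ha
    simp only [Finset.mem_product, Finset.mem_range] at ha
    by_cases h : k ≤ j
    · rw [if_pos h]
      simp only [Finset.mem_product, Finset.mem_range]
      omega
    · rw [if_neg h]
      simp only [Finset.mem_product, Finset.mem_range]
      omega
end

section
/- For even d, the stratum 𝒫_d^{(∅)} of monic real polynomials of degree d without real roots is convex and nonempty: the set C = { a : Fin d → ℝ | P_a has no real roots } is a nonempty convex subset of ℝ^d (so that, as a subspace of ℝ^d, it is contractible). -/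
open Polynomial

/-- The monic polynomial `P_a = X^d + Σ_{i<d} a i · X^i` associated to a
coefficient vector `a : Fin d → ℝ`. -/
noncomputable def poly (d : ℕ) (a : Fin d → ℝ) : ℝ[X] :=
  X ^ d + ∑ i : Fin d, C (a i) * X ^ (i : ℕ)

lemma eval_poly (d : ℕ) (a : Fin d → ℝ) (x : ℝ) :
    (poly d a).eval x = x ^ d + ∑ i : Fin d, a i * x ^ (i : ℕ) := by
  simp [poly, eval_finset_sum]

lemma poly_degree (d : ℕ) (a : Fin d → ℝ) : (poly d a).degree = d := by
  rw [poly, degree_add_eq_left_of_degree_lt, degree_X_pow]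
  rw [degree_X_pow]
  exact degree_sum_fin_lt a

lemma pos_of_noroots {d : ℕ} {a : Fin d → ℝ}
    (h : ∀ x : ℝ, ¬ (poly d a).IsRoot x) (x : ℝ) : 0 < (poly d a).eval x := by
  rcases Nat.eq_zero_or_pos d with hd0 | hd0
  · subst hd0; simp [eval_poly]
  -- the polynomial tends to +∞
  have hmon : (poly d a).Monic := by
    apply monic_X_pow_add
    exact degree_sum_fin_lt a
  have htend : Filter.Tendsto (fun x => (poly d a).eval x) Filter.atTop Filter.atTop := by
    apply Polynomial.tendsto_atTop_of_leadingCoeff_nonneg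
    · rw [poly_degree]; exact_mod_cast hd0
    · rw [hmon.leadingCoeff]; norm_num
  have hM : ∃ M, x ≤ M ∧ 0 < (poly d a).eval M := by
    have h1 := htend.eventually (Filter.eventually_gt_atTop 0)
    have h2 := Filter.eventually_ge_atTop x
    obtain ⟨M, hM1, hM2⟩ := (h2.and h1).exists
    exact ⟨M, hM1, hM2⟩
  obtain ⟨M, hxM, hMpos⟩ := hM
  by_contra hneg
  push_neg at hneg
  have hlt : (poly d a).eval x < 0 := lt_of_le_of_ne hneg (fun he => h x he)
  have hcont : ContinuousOn (fun y => (poly d a).eval y) (Set.Icc x M) :=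
    ((poly d a).continuous_aeval).continuousOn
  have : (0 : ℝ) ∈ Set.Icc ((poly d a).eval x) ((poly d a).eval M) :=
    ⟨le_of_lt hlt, le_of_lt hMpos⟩
  obtain ⟨c, _, hc⟩ := intermediate_value_Icc hxM hcont this
  exact h c hc

/-- for even `d`, the stratum `𝒫_d^{(∅)}` of monic real
polynomials of degree `d` without real roots, viewed as the set
`C = { a : Fin d → ℝ | P_a has no real roots } ⊆ ℝ^d`, is nonempty and
convex (so that, as a subspace of `ℝ^d`, it is contractible). -/
theorem no_real_roots_stratum_nonempty_convex (d : ℕ) (hd : d % 2 = 0) :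
    ({a : Fin d → ℝ | ∀ x : ℝ, ¬ (poly d a).IsRoot x} : Set (Fin d → ℝ)).Nonempty ∧
    Convex ℝ {a : Fin d → ℝ | ∀ x : ℝ, ¬ (poly d a).IsRoot x} ∧
    ContractibleSpace
      ({a : Fin d → ℝ | ∀ x : ℝ, ¬ (poly d a).IsRoot x} : Set (Fin d → ℝ)) := by
  have hne : ({a : Fin d → ℝ | ∀ x : ℝ, ¬ (poly d a).IsRoot x} : Set (Fin d → ℝ)).Nonempty := by
    rcases Nat.eq_zero_or_pos d with h0 | h0
    · subst h0
      refine ⟨fun i => 0, fun x hx => ?_⟩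
      simp [poly, IsRoot] at hx
    · refine ⟨fun i => if (i : ℕ) = 0 then 1 else 0, fun x hx => ?_⟩
      have heven : Even d := Nat.even_iff.mpr hd
      have hx' : (poly d (fun i => if (i : ℕ) = 0 then (1:ℝ) else 0)).eval x = x ^ d + 1 := by
        rw [eval_poly]
        congr 1
        rw [Finset.sum_eq_single (⟨0, h0⟩ : Fin d)]
        · simp
        · intro i _ hi
          have : (i : ℕ) ≠ 0 := fun h => hi (Fin.ext h)
          simp [this]
        · simp
      have hpow : (0:ℝ) ≤ x ^ d := heven.pow_nonneg x
      rw [IsRoot, hx'] at hx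
      linarith
  have hconv : Convex ℝ {a : Fin d → ℝ | ∀ x : ℝ, ¬ (poly d a).IsRoot x} := by
    intro a ha b hb t s ht hs hts x hroot
    have hpa := pos_of_noroots ha x
    have hpb := pos_of_noroots hb x
    have : (poly d (t • a + s • b)).eval x
        = t * (poly d a).eval x + s * (poly d b).eval x := by
      simp only [eval_poly, Pi.add_apply, Pi.smul_apply, smul_eq_mul]
      have hsum : ∑ i : Fin d, (t * a i + s * b i) * x ^ (i : ℕ)
          = t * ∑ i : Fin d, a i * x ^ (i : ℕ) + s * ∑ i : Fin d, b i * x ^ (i : ℕ) := by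
        rw [Finset.mul_sum, Finset.mul_sum, ← Finset.sum_add_distrib]
        exact Finset.sum_congr rfl fun i _ => by ring
      rw [hsum]
      linear_combination (-(x ^ d)) * hts
    rw [IsRoot, this] at hroot
    rcases eq_or_lt_of_le ht with ht0 | ht0
    · have hs1 : s = 1 := by linarith
      rw [← ht0, hs1] at hroot; linarith
    · nlinarith [mul_nonneg hs hpb.le, mul_pos ht0 hpa]
  exact ⟨hne, hconv, hconv.contractibleSpace hne⟩
end
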